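/- arXiv:2112.12202 — 5 statements merged into one kernel-verified Lean document; each statement's English description precedes it below -/
import Mathlib

section
/- Let s ≤ t be positive integers with ⌊t/s⌋ = r, ⌈t/s⌉ = r+1, and t(r+1) ≤ s². Suppose A₁, A₂, …, A_{s+1} are squares of side s in (ℤ/tℤ)² such that both the family A₁,…,A_s and the family A₂,…,A_{s+1} cover (ℤ/tℤ)². Then for each coordinate γ ∈ {1,2}, the set of values of the γ-th coordinate attained by points of A₁ and the set of values of the γ-th coordinate attained by points of A_{s+1} have at least s − (s² − (r+1)t) common elements. -/
open Set

noncomputable section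

/-- A square of side `s` in `(ℤ/tℤ)²` with base vertex `x0`. -/
def square (t s : ℕ) (x0 : Fin 2 → ZMod t) : Set (Fin 2 → ZMod t) :=
  {x | ∀ i, ∃ j : ℕ, j < s ∧ x i = x0 i + (j : ZMod t)}

/-- The set of values of the `γ`-th coordinate attained by points of the square with
base vertex `x0`, namely `{x0 γ, x0 γ + 1, …, x0 γ + s - 1}` in `ZMod t`. -/
def coordValues (t s : ℕ) (γ : Fin 2) (x0 : Fin 2 → ZMod t) : Set (ZMod t) :=
  {v | ∃ j : ℕ, j < s ∧ v = x0 γ + (j : ZMod t)}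

/-!
Let `m(v)` count the squares among `A₁, …, A_s` whose `γ`-coordinate set contains `v`. The line
`{x | x γ = v}` has `t` points and each square meets it in at most `s` of them, so since
`r s < t` covering forces `m(v) ≥ r + 1`; likewise for `A₂, …, A_{s+1}`. Double counting gives
`∑ v, m(v) = s²`. A value of `A₁`'s coordinate set missing from that of `A_{s+1}` is counted once
more by the first family than by the second, so there `m(v) ≥ r + 2`; hence at most
`s² - (r + 1) t` values of `A₁`'s set are missing from `A_{s+1}`'s.
-/

open Finset

def arc (t s : ℕ) (c : ZMod t) : Finset (ZMod t) :=
  (range s).image fun k : ℕ => c + k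

theorem mem_arc {t s : ℕ} {c v : ZMod t} : v ∈ arc t s c ↔ ∃ j : ℕ, j < s ∧ v = c + j := by
  simp only [arc, Finset.mem_image, Finset.mem_range, eq_comm]

theorem card_arc_le (t s : ℕ) (c : ZMod t) : #(arc t s c) ≤ s :=
  card_image_le.trans (card_range s).le

theorem card_arc {t s : ℕ} (hst : s ≤ t) (c : ZMod t) : #(arc t s c) = s := by
  refine (card_image_of_injOn fun i hi j hj hij => ?_).trans (card_range s)
  have hval := congrArg ZMod.val (add_left_cancel hij)
  rwa [ZMod.val_cast_of_lt ((mem_range.1 hi).trans_le hst),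
    ZMod.val_cast_of_lt ((mem_range.1 hj).trans_le hst)] at hval

theorem coordValues_eq_arc (t s : ℕ) (γ : Fin 2) (x0 : Fin 2 → ZMod t) :
    coordValues t s γ x0 = arc t s (x0 γ) := by
  ext v; exact mem_arc.symm

theorem mem_square_iff {t s : ℕ} {x x0 : Fin 2 → ZMod t} :
    x ∈ square t s x0 ↔ ∀ i, x i ∈ arc t s (x0 i) := by
  simp only [square, Set.mem_ofPred_eq, mem_arc]

theorem le_mul_card_filter_of_forall_mem_square {ι : Type*} {t s : ℕ} [NeZero t]
    {F : Finset ι} {b : ι → Fin 2 → ZMod t} (hcov : ∀ x, ∃ j ∈ F, x ∈ square t s (b j))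
    (γ : Fin 2) (v : ZMod t) : t ≤ #{j ∈ F | v ∈ arc t s (b j γ)} * s := by
  classical
  obtain ⟨γ', hγ'⟩ := exists_ne γ
  have hrow : (univ : Finset (ZMod t)) ⊆
      {j ∈ F | v ∈ arc t s (b j γ)}.biUnion fun j => arc t s (b j γ') := by
    intro w _
    obtain ⟨j, hjF, hj⟩ := hcov fun i => if i = γ then v else w
    rw [mem_square_iff] at hj
    have hv := hj γ
    have hw := hj γ'
    simp only [if_neg hγ'] at hv hw
    exact mem_biUnion.2 ⟨j, mem_filter.2 ⟨hjF, hv⟩, hw⟩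
  calc t = #(univ : Finset (ZMod t)) := (ZMod.card t).symm
    _ ≤ _ := card_le_card hrow
    _ ≤ _ := card_biUnion_le_card_mul _ _ _ fun j _ => card_arc_le t s _

section Multiplicity

variable {ι α : Type*} [DecidableEq α] [Fintype α]

theorem sum_card_filter_mem (F : Finset ι) (I : ι → Finset α) :
    ∑ v, #{j ∈ F | v ∈ I j} = ∑ j ∈ F, #(I j) := by
  have := sum_card_bipartiteAbove_eq_sum_card_bipartiteBelow (fun j v => v ∈ I j) (s := F)
    (t := univ)
  simp only [bipartiteAbove, bipartiteBelow, filter_univ_mem] at this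
  exact this.symm

theorem card_filter_erase_eq_add_one [DecidableEq ι] (F : Finset ι) (p : ι → Prop)
    [DecidablePred p] {a b : ι} (ha : a ∈ F) (hpa : p a) (hpb : ¬p b) :
    #{j ∈ F.erase b | p j} = #{j ∈ F.erase a | p j} + 1 := by
  rw [filter_erase, filter_erase, erase_eq_of_notMem fun h => hpb (mem_filter.1 h).2,
    card_erase_add_one (mem_filter.2 ⟨ha, hpa⟩)]

theorem card_add_mul_card_le_sum (g : α → ℕ) (c : ℕ) (D : Finset α)
    (hg : ∀ v, c ≤ g v) (hD : ∀ v ∈ D, c + 1 ≤ g v) :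
    #D + c * Fintype.card α ≤ ∑ v, g v := by
  calc #D + c * Fintype.card α = ∑ v, (c + if v ∈ D then 1 else 0) := by
        rw [sum_add_distrib, sum_boole, filter_univ_mem, sum_const, smul_eq_mul, card_univ,
          Nat.cast_id, add_comm, mul_comm]
    _ ≤ ∑ v, g v := sum_le_sum fun v _ => by
        split_ifs with hv
        exacts [hD v hv, by simpa using hg v]

theorem card_sdiff_add_mul_card_le [DecidableEq ι] [Fintype ι] (I : ι → Finset α) (a b : ι)
    (c : ℕ) (hb : ∀ v, c ≤ #{j ∈ univ.erase b | v ∈ I j})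
    (ha : ∀ v, c ≤ #{j ∈ univ.erase a | v ∈ I j}) :
    #(I a \ I b) + c * Fintype.card α ≤ ∑ j ∈ univ.erase b, #(I j) := by
  rw [← sum_card_filter_mem]
  refine card_add_mul_card_le_sum _ c _ hb fun v hv => ?_
  obtain ⟨hva, hvb⟩ := mem_sdiff.1 hv
  rw [card_filter_erase_eq_add_one univ (v ∈ I ·) (mem_univ a) hva hvb]
  exact Nat.succ_le_succ (ha v)

end Multiplicity

theorem mul_lt_of_ceil_div_eq_add_one {s t r : ℕ} (hs : 0 < s)
    (hceil : ⌈(t : ℚ) / (s : ℚ)⌉ = (r : ℤ) + 1) : r * s < t := by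
  have hlt := (Int.ceil_eq_iff.1 hceil).1
  push_cast at hlt
  rw [add_sub_cancel_right, lt_div_iff₀ (by exact_mod_cast hs)] at hlt
  exact_mod_cast hlt

theorem coordinate_sets_intersect_general (s t r : ℕ) (hs : 0 < s) (hst : s ≤ t)
    (hceil : ⌈(t : ℚ) / (s : ℚ)⌉ = (r : ℤ) + 1)
    (b : Fin (s + 1) → Fin 2 → ZMod t)
    (hcov1 : (⋃ j : Fin (s + 1), ⋃ (_ : (j : ℕ) < s), square t s (b j)) = Set.univ)
    (hcov2 : (⋃ j : Fin (s + 1), ⋃ (_ : (j : ℕ) ≠ 0), square t s (b j)) = Set.univ)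
    (γ : Fin 2) :
    (s : ℤ) - ((s : ℤ)^2 - (r + 1) * t) ≤
      ((coordValues t s γ (b 0) ∩ coordValues t s γ (b (Fin.last s))).ncard : ℤ) := by
  have : NeZero t := ⟨(hs.trans_le hst).ne'⟩
  have hrs := mul_lt_of_ceil_div_eq_add_one hs hceil
  have hmult : ∀ c : Fin (s + 1), (∀ x, ∃ j ∈ univ.erase c, x ∈ square t s (b j)) →
      ∀ v, r + 1 ≤ #{j ∈ univ.erase c | v ∈ arc t s (b j γ)} := fun c hcov v =>
    Nat.lt_of_mul_lt_mul_right <| hrs.trans_le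
      (le_mul_card_filter_of_forall_mem_square hcov γ v)
  have hcov_last : ∀ x, ∃ j ∈ univ.erase (Fin.last s), x ∈ square t s (b j) := fun x => by
    simpa [← Fin.lt_last_iff_ne_last, Fin.lt_def] using Set.eq_univ_iff_forall.1 hcov1 x
  have hcov_zero : ∀ x, ∃ j ∈ univ.erase 0, x ∈ square t s (b j) := fun x => by
    simpa using Set.eq_univ_iff_forall.1 hcov2 x
  have hdiff := card_sdiff_add_mul_card_le (fun j => arc t s (b j γ)) 0 (Fin.last s) (r + 1)
    (hmult _ hcov_last) (hmult _ hcov_zero)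
  rw [sum_congr rfl fun j _ => card_arc hst _, sum_const, card_erase_of_mem (mem_univ _),
    card_univ, Fintype.card_fin, ZMod.card, smul_eq_mul, add_tsub_cancel_right] at hdiff
  have hsplit := card_inter_add_card_sdiff (arc t s (b 0 γ)) (arc t s (b (Fin.last s) γ))
  rw [card_arc hst] at hsplit
  rw [coordValues_eq_arc, coordValues_eq_arc, ← coe_inter, Set.ncard_coe_finset]
  zify at hdiff hsplit
  linarith [sq (s : ℤ)]

/-- Claim 3: if both `A₁, …, A_s` and `A₂, …, A_{s+1}` cover `(ℤ/tℤ)²`, then for each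
coordinate `γ`, the `γ`-coordinate sets of `A₁` and `A_{s+1}` share at least
`s - (s² - (r+1)t)` elements. -/
theorem coordinate_sets_intersect (s t r : ℕ) (hs : 0 < s) (hst : s ≤ t)
    (hfloor : ⌊(t : ℚ) / (s : ℚ)⌋ = (r : ℤ))
    (hceil : ⌈(t : ℚ) / (s : ℚ)⌉ = (r : ℤ) + 1)
    (hts : t * (r + 1) ≤ s^2)
    (b : Fin (s + 1) → Fin 2 → ZMod t)
    (hcov1 : (⋃ j : Fin (s + 1), ⋃ (_ : (j : ℕ) < s), square t s (b j)) = Set.univ)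
    (hcov2 : (⋃ j : Fin (s + 1), ⋃ (_ : (j : ℕ) ≠ 0), square t s (b j)) = Set.univ)
    (γ : Fin 2) :
    (s : ℤ) - ((s : ℤ)^2 - (r + 1) * t) ≤
      ((coordValues t s γ (b 0) ∩ coordValues t s γ (b (Fin.last s))).ncard : ℤ) :=
  coordinate_sets_intersect_general s t r hs hst hceil b hcov1 hcov2 γ

end
end

section
/- Let r ≥ 2 be an integer, ξ ∈ {1,…,r}, s = r² + r + ξ, and t = r³ + r² + ξ(r+1). Then the s squares of side s in (ℤ/tℤ)² with base vertices (r·i, (r²+r+1)·i) for i ∈ {0, 1, …, s−1} cover the whole discrete torus (ℤ/tℤ)². -/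
/-!
Write `c = r² + r + 1 ≤ s`. For fixed `x`, the indices `i` whose square has `x` in its first
side form a run of consecutive integers, and along a run `i₀, …, i₀ + D` the second sides
`[c i, c i + s)` overlap and cover the arc `[c i₀, c i₀ + c (D + 1))`. If `x ≥ r² + ξ` the run
has `r + 1` elements, and `c (r + 1) > t`. If `x < r² + ξ`, write `x = r q + ρ`: the run
`0, …, q` covers `y < c (q + 1)`, and otherwise the run `q + r² + ξ, …, s - 1` at the other end,
whose arc wraps around because `c s ≡ r (r + 1 - ξ) (mod t)`.
-/

open Set

noncomputable section

def CoveredBySquares (r c s t x y : ℤ) : Prop :=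
  ∃ i j₁ j₂ : ℤ, 0 ≤ i ∧ i < s ∧ 0 ≤ j₁ ∧ j₁ < s ∧ 0 ≤ j₂ ∧ j₂ < s ∧
    x ≡ r * i + j₁ [ZMOD t] ∧ y ≡ c * i + j₂ [ZMOD t]

theorem coveredBySquares_of_run {r c s t x y i₀ D j₁ k : ℤ} (hr : 0 ≤ r) (hc : 0 < c)
    (hcs : c ≤ s) (hi₀ : 0 ≤ i₀) (hD : i₀ + D < s) (hj₁ : r * D ≤ j₁) (hj₁s : j₁ < s)
    (hk : 0 ≤ k) (hkD : k < c * (D + 1))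
    (hx : x ≡ r * i₀ + j₁ [ZMOD t]) (hy : y ≡ c * i₀ + k [ZMOD t]) :
    CoveredBySquares r c s t x y := by
  have hkc : k / c ≤ D := Int.lt_add_one_iff.1 <| (Int.ediv_lt_iff_lt_mul hc).2 (by linarith)
  have hkc0 : 0 ≤ k / c := Int.ediv_nonneg hk hc.le
  have hrkc : r * (k / c) ≤ r * D := mul_le_mul_of_nonneg_left hkc hr
  have hrkc0 : 0 ≤ r * (k / c) := mul_nonneg hr hkc0
  refine ⟨i₀ + k / c, j₁ - r * (k / c), k % c, by linarith, by linarith, by linarith,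
    by linarith, Int.emod_nonneg k hc.ne', (Int.emod_lt_of_pos k hc).trans_le hcs, ?_, ?_⟩
  · rwa [show r * (i₀ + k / c) + (j₁ - r * (k / c)) = r * i₀ + j₁ by ring]
  · rwa [mul_add, add_assoc, Int.mul_ediv_add_emod]

section

variable {r ξ s t x y : ℤ}

theorem coveredBySquares_of_sq_add_le (hξ1 : 1 ≤ ξ) (hξ2 : ξ ≤ r) (hs : s = r ^ 2 + r + ξ)
    (ht : t = r ^ 3 + r ^ 2 + ξ * (r + 1)) (hx : r ^ 2 + ξ ≤ x) (hxt : x < t) :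
    CoveredBySquares r (r ^ 2 + r + 1) s t x y := by
  have hr : 0 < r := by linarith
  set c := r ^ 2 + r + 1
  set i₀ := (x - r ^ 2 - ξ) / r
  set ρ := (x - r ^ 2 - ξ) % r
  have hx_eq : r * i₀ + ρ = x - r ^ 2 - ξ := Int.mul_ediv_add_emod _ r
  have ht0 : 0 < t := by rw [ht]; positivity
  have htc : t < c * (r + 1) := by rw [ht]; nlinarith
  have hi₀ : i₀ < r ^ 2 + ξ := (Int.ediv_lt_iff_lt_mul hr).2 (by rw [ht] at hxt; linarith)
  have hρ0 : 0 ≤ ρ := Int.emod_nonneg _ hr.ne'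
  have hρ : ρ < r := Int.emod_lt_of_pos _ hr
  refine coveredBySquares_of_run (i₀ := i₀) (D := r) (j₁ := r ^ 2 + ξ + ρ)
    (k := (y - c * i₀) % t) hr.le (by positivity) (by linarith)
    (Int.ediv_nonneg (by linarith) hr.le) (by linarith) (by nlinarith) (by linarith)
    (Int.emod_nonneg _ ht0.ne') ((Int.emod_lt_of_pos _ ht0).trans htc) ?_ ?_
  · rw [show r * i₀ + (r ^ 2 + ξ + ρ) = x by linarith]
  · simpa using ((Int.mod_modEq (y - c * i₀) t).add_left (c * i₀)).symm

theorem coveredBySquares_of_lt_sq_add (hξ1 : 1 ≤ ξ) (hξ2 : ξ ≤ r) (hs : s = r ^ 2 + r + ξ)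
    (ht : t = r ^ 3 + r ^ 2 + ξ * (r + 1)) (hx0 : 0 ≤ x) (hx : x < r ^ 2 + ξ) (hy0 : 0 ≤ y)
    (hyt : y < t) : CoveredBySquares r (r ^ 2 + r + 1) s t x y := by
  have hr : 0 < r := by linarith
  set c := r ^ 2 + r + 1
  set q := x / r
  set ρ := x % r
  have hx_eq : r * q + ρ = x := Int.mul_ediv_add_emod x r
  have hq0 : 0 ≤ q := Int.ediv_nonneg hx0 hr.le
  have hρ0 : 0 ≤ ρ := Int.emod_nonneg x hr.ne'
  have hρ : ρ < r := Int.emod_lt_of_pos x hr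
  rcases lt_or_ge y (c * (q + 1)) with hy | hy
  · refine coveredBySquares_of_run (i₀ := 0) (D := q) (j₁ := x) (k := y) hr.le (by positivity)
      (by linarith) le_rfl (by linarith [Int.ediv_le_self r hx0]) (by linarith) (by linarith)
      hy0 (by simpa using hy) (by simp) (by simp)
  · have hqr : q < r := by rw [ht] at hyt; nlinarith
    refine coveredBySquares_of_run (i₀ := q + r ^ 2 + ξ) (D := r - 1 - q) (j₁ := r ^ 2 + ξ + ρ)
      (k := y + c * (r - q) - r * (r + 1 - ξ) - t) hr.le (by positivity) (by linarith)
      (by positivity) (by linarith) (by nlinarith) (by linarith) (by rw [ht]; nlinarith)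
      (by nlinarith) ?_ ?_
    · rw [show r * (q + r ^ 2 + ξ) + (r ^ 2 + ξ + ρ) = x + t * 1 by
        linear_combination hx_eq - ht]
      exact Int.modEq_add_fac_self.symm
    · rw [show c * (q + r ^ 2 + ξ) + (y + c * (r - q) - r * (r + 1 - ξ) - t) = y + t * r by
        linear_combination -(r + 1) * ht]
      exact Int.modEq_add_fac_self.symm

theorem coveredBySquares (hξ1 : 1 ≤ ξ) (hξ2 : ξ ≤ r) (hs : s = r ^ 2 + r + ξ)
    (ht : t = r ^ 3 + r ^ 2 + ξ * (r + 1)) (hx0 : 0 ≤ x) (hxt : x < t) (hy0 : 0 ≤ y)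
    (hyt : y < t) : CoveredBySquares r (r ^ 2 + r + 1) s t x y := by
  rcases le_or_gt (r ^ 2 + ξ) x with hx | hx
  · exact coveredBySquares_of_sq_add_le hξ1 hξ2 hs ht hx hxt
  · exact coveredBySquares_of_lt_sq_add hξ1 hξ2 hs ht hx0 hx hy0 hyt

end

theorem mem_iUnion_square_of_coveredBySquares {r c s t : ℕ} [NeZero t] {p : Fin 2 → ZMod t}
    (h : CoveredBySquares r c s t (p 0).val (p 1).val) :
    p ∈ ⋃ i : Fin s,
      square t s ![((r * (i : ℕ) : ℕ) : ZMod t), ((c * (i : ℕ) : ℕ) : ZMod t)] := by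
  obtain ⟨i, j₁, j₂, hi0, his, hj₁0, hj₁s, hj₂0, hj₂s, hx, hy⟩ := h
  lift i to ℕ using hi0
  lift j₁ to ℕ using hj₁0
  lift j₂ to ℕ using hj₂0
  have hx := (ZMod.intCast_eq_intCast_iff _ _ t).2 hx
  have hy := (ZMod.intCast_eq_intCast_iff _ _ t).2 hy
  push_cast at hx hy
  refine mem_iUnion.2 ⟨⟨i, by omega⟩, fun k => ?_⟩
  fin_cases k
  · exact ⟨j₁, by omega, by simpa using hx⟩
  · exact ⟨j₂, by omega, by simpa using hy⟩

theorem squares_cover_two_torus_general (r ξ : ℕ) (hξ1 : 1 ≤ ξ) (hξ2 : ξ ≤ r)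
    (s t : ℕ) (hs : s = r^2 + r + ξ) (ht : t = r^3 + r^2 + ξ * (r + 1)) :
    (⋃ i : Fin s,
      square t s ![((r * (i : ℕ) : ℕ) : ZMod t), (((r^2 + r + 1) * (i : ℕ) : ℕ) : ZMod t)])
      = Set.univ := by
  have : NeZero t := ⟨by rw [ht]; positivity⟩
  refine eq_univ_of_forall fun p => mem_iUnion_square_of_coveredBySquares ?_
  exact_mod_cast coveredBySquares (x := (p 0).val) (y := (p 1).val) (r := r) (ξ := ξ)
    (by exact_mod_cast hξ1) (by exact_mod_cast hξ2) (by exact_mod_cast hs)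
    (by exact_mod_cast ht) (by positivity) (by exact_mod_cast (p 0).val_lt) (by positivity)
    (by exact_mod_cast (p 1).val_lt)

/-- Claim 4: the `s` squares of side `s` with base vertices `(r·i, (r²+r+1)·i)`,
`i ∈ {0, 1, …, s-1}`, cover `(ℤ/tℤ)²`. -/
theorem squares_cover_two_torus (r ξ : ℕ) (hr : 2 ≤ r) (hξ1 : 1 ≤ ξ) (hξ2 : ξ ≤ r)
    (s t : ℕ) (hs : s = r^2 + r + ξ) (ht : t = r^3 + r^2 + ξ * (r + 1)) :
    (⋃ i : Fin s,
      square t s ![((r * (i : ℕ) : ℕ) : ZMod t), (((r^2 + r + 1) * (i : ℕ) : ℕ) : ZMod t)])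
      = Set.univ :=
  squares_cover_two_torus_general r ξ hξ1 hξ2 s t hs ht

end
end

section
/- Let r ≥ 2 be an integer, ξ ∈ {1,…,r}, s = r² + r + ξ, and t = r³ + r² + ξ(r+1). Then the t cubes of side s in (ℤ/tℤ)³ with base vertices (i, r·i, (r²+r+1)·i) for i ∈ ℤ/tℤ cover the whole discrete torus (ℤ/tℤ)³. -/
open Set


lemma exists_ceil (a b : ℕ) (hb : 0 < b) (ha : 1 ≤ a) :
    ∃ f w, b * f = a + w ∧ w < b ∧ 1 ≤ f := by
  obtain ⟨a', rfl⟩ : ∃ a', a = a' + 1 := ⟨a - 1, by omega⟩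
  have h := Nat.div_add_mod a' b
  have hρ : a' % b < b := Nat.mod_lt _ hb
  refine ⟨a' / b + 1, b - 1 - a' % b, ?_, by omega, Nat.succ_le_succ (Nat.zero_le _)⟩
  have h2 : b * (a' / b + 1) = b * (a' / b) + b := by ring
  generalize b * (a' / b + 1) = X at *
  generalize b * (a' / b) = Y at *
  omega

lemma exists_between_aux (y c t : ℕ) (ht : 0 < t) :
    ∃ k X, k * t = c + X ∧ y < X ∧ X ≤ y + t := by
  have h := Nat.div_add_mod (y + c) t
  have hρ : (y + c) % t < t := Nat.mod_lt _ ht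
  refine ⟨(y + c) / t + 1, y + t - (y+c) % t, ?_, by omega, by omega⟩
  have h2 : ((y+c)/t + 1) * t = t * ((y+c)/t) + t := by ring
  generalize ((y+c)/t + 1) * t = X at *
  generalize t * ((y+c)/t) = Y at *
  omega

lemma key (r ξ s t u c : ℕ) (hr : 2 ≤ r) (hξ1 : 1 ≤ ξ) (hξ2 : ξ ≤ r)
    (hs : s = r^2 + r + ξ) (ht : t = r^3 + r^2 + ξ * (r + 1))
    (hu : u < t) (hc : c < t) :
    ∃ j a b k1 k2 : ℕ, j < s ∧ a < s ∧ b < s ∧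
      u + r * j = k1 * t + a ∧ c + (r^2 + r + 1) * j = k2 * t + b := by
  have hpow : r^2 + r + 1 = r*r + r + 1 := by ring
  rw [hpow]
  have hs' : s = r*r + r + ξ := by rw [hs]; ring
  have ht' : t = r*r*r + r*r + ξ*r + ξ := by rw [ht]; ring
  clear hs ht hpow
  have hr2 : r ≤ r*r := Nat.le_mul_of_pos_left r (by omega)
  have hr3 : r*r ≤ r*r*r := Nat.le_mul_of_pos_right (r*r) (by omega)
  have hrr : 4 ≤ r*r := by nlinarith
  have hξr : ξ*r ≤ r*r := Nat.mul_le_mul_right r hξ2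
  have hξr' : ξ ≤ ξ*r := by nlinarith
  have hrξr : r ≤ ξ*r := Nat.le_mul_of_pos_left r hξ1
  have hst : s < t := by omega
  have hm : 0 < r*r + r + 1 := by omega
  rcases lt_or_ge u s with hu' | huI
  · -- u < s : cases II and III
    rcases lt_or_ge c s with hc' | hcs
    · exact ⟨0, u, c, 0, 0, by omega, by omega, by omega, by omega, by omega⟩
    · -- c ≥ s
      obtain ⟨D, hDeq⟩ : ∃ D, c + D = t := ⟨t - c, by omega⟩
      have hD1 : 1 ≤ D := by omega
      have hD2 : D + s ≤ t := by omega
      obtain ⟨f, w, hfw, hw, hf1⟩ := exists_ceil D (r*r+r+1) hm hD1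
      have hfr : f ≤ r := by
        have h1 : (r*r+r+1) * f < (r*r+r+1) * (r+1) := by
          have e1 : (r*r+r+1) * (r+1) = r*r*r + 2*(r*r) + 2*r + 1 := by ring
          omega
        have := Nat.lt_of_mul_lt_mul_left h1
        omega
      have hrfr : r * f ≤ r * r := Nat.mul_le_mul_left r hfr
      rcases lt_or_ge u (r + ξ) with huII | huIII
      · -- case II.b : j = f
        exact ⟨f, u + r*f, w, 0, 1, by omega, by omega, by omega, by omega, by omega⟩
      · -- case III.b (r+ξ ≤ u < s)
        obtain ⟨d, hd⟩ : ∃ d, u + 1 + d = s := ⟨s - u - 1, by omega⟩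
        obtain ⟨q, w', hqw, hw'⟩ : ∃ q w', r*q + w' = d ∧ w' < r :=
          ⟨d/r, d%r, Nat.div_add_mod d r, Nat.mod_lt _ (by omega)⟩
        rcases le_or_gt f q with hfq | hqf
        · -- III.b.i : j = f
          have hrfq : r * f ≤ r * q := Nat.mul_le_mul_left r hfq
          exact ⟨f, u + r*f, w, 0, 1, by omega, by omega, by omega, by omega, by omega⟩
        · -- III.b.ii : q < f
          have hq1f : r*q + r ≤ r*f := by
            have h2 := Nat.mul_le_mul_left r (show q + 1 ≤ f from hqf)
            have e1 : r*(q+1) = r*q + r := by ring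
            omega
          rcases le_or_gt (w + ξ) r with hwξ | hwξ
          · -- subcase w + ξ ≤ r : j = f + r*r + ξ
            have hfr1 : f ≤ r - 1 := by
              rcases lt_or_ge f r with h | h
              · omega
              · exfalso
                have hfr' : f = r := by omega
                rw [hfr'] at hfw
                have e1 : (r*r+r+1) * r = r*r*r + r*r + r := by ring
                omega
            have e5 : r*(f + r*r + ξ) = r*f + r*r*r + ξ*r := by ring
            refine ⟨f + r*r + ξ, u + r*(f + r*r + ξ) - t, w + r*r + ξ, 1, r+1,
              by omega, by omega, by omega, by omega, ?_⟩
            · -- c equation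
              have e1 : (r*r+r+1)*(f + r*r + ξ) =
                  (r*r+r+1)*f + r*r*r*r + r*r*r + r*r + ξ*(r*r) + ξ*r + ξ := by ring
              have e2 : (r+1)*t = r*r*r*r + 2*(r*r*r) + r*r + ξ*(r*r) + 2*(ξ*r) + ξ := by
                rw [ht']; ring
              omega
          · -- subcase w + ξ > r : j = f + r*r + (ξ-1)
            obtain ⟨e, he⟩ : ∃ e, ξ = e + 1 := ⟨ξ - 1, by omega⟩
            obtain ⟨b, hb⟩ : ∃ b, w + e = r + b := ⟨w + e - r, by omega⟩
            have e5 : r*(f + r*r + e) = r*f + r*r*r + e*r := by ring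
            have e6 : ξ*r = e*r + r := by rw [he]; ring
            refine ⟨f + r*r + e, u + r*(f + r*r + e) - t, b, 1, r+1,
              by omega, by omega, by omega, by omega, ?_⟩
            · have e1 : (r*r+r+1)*(f + r*r + e) =
                  (r*r+r+1)*f + r*r*r*r + r*r*r + r*r + e*(r*r) + e*r + e := by ring
              have e2 : (r+1)*t = r*r*r*r + 2*(r*r*r) + r*r + ξ*(r*r) + 2*(ξ*r) + ξ := by
                rw [ht']; ring
              have e3 : ξ*(r*r) = e*(r*r) + r*r := by rw [he]; ring
              have e4 : ξ*r = e*r + r := by rw [he]; ring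
              omega
  · -- case I : u ≥ s
    obtain ⟨E, hEeq⟩ : ∃ E, u + E = t := ⟨t - u, by omega⟩
    have hE1 : 1 ≤ E := by omega
    have hE2 : E + s ≤ t := by omega
    obtain ⟨J, y, hJ, hy, hJ1⟩ := exists_ceil E r (by omega) hE1
    obtain ⟨J', rfl⟩ : ∃ J', J = J' + 1 := ⟨J - 1, by omega⟩
    have hJub : J' + 1 + r + 1 ≤ s := by
      have h1 : r * (J'+1) < r * (r*r + ξ) := by
        have e7 : r*(r*r + ξ) = r*r*r + ξ*r := by ring
        omega
      have := Nat.lt_of_mul_lt_mul_left h1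
      omega
    obtain ⟨k, X, hkX, hX1, hX2⟩ := exists_between_aux ((r*r+r+1)*J') c t (by omega)
    obtain ⟨j, b, hjb, hb, hj1⟩ := exists_ceil X (r*r+r+1) hm (by omega)
    have hjJ : J' < j := by
      have h1 : (r*r+r+1) * J' < (r*r+r+1) * j := by omega
      exact Nat.lt_of_mul_lt_mul_left h1
    have hjub : j ≤ J' + r + 1 := by
      have h1 : (r*r+r+1) * j < (r*r+r+1) * (J' + r + 2) := by
        have e8 : (r*r+r+1)*(J' + r + 2) = (r*r+r+1)*J' + (r*r*r + 3*(r*r) + 3*r + 2) := by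
          ring
        omega
      have := Nat.lt_of_mul_lt_mul_left h1
      omega
    have hrjlb : r*(J'+1) ≤ r*j := Nat.mul_le_mul_left r (show J'+1 ≤ j from hjJ)
    have hrjub : r*j ≤ r*(J'+1) + r*r := by
      have h1 := Nat.mul_le_mul_left r hjub
      have e10 : r*(J' + r + 1) = r*(J'+1) + r*r := by ring
      omega
    have hE11 : r*(J'+1) = r*J' + r := by ring
    refine ⟨j, u + r*j - t, b, 1, k, by omega, by omega, by omega, by omega, by omega⟩


noncomputable section

/-- A cube of side `s` in `(ℤ/tℤ)³` with base vertex `x0`. -/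
def cube (t s : ℕ) (x0 : Fin 3 → ZMod t) : Set (Fin 3 → ZMod t) :=
  {x | ∀ i, ∃ j : ℕ, j < s ∧ x i = x0 i + (j : ZMod t)}

/-- The `t` cubes of side `s` with base vertices `(i, r·i, (r²+r+1)·i)`, `i ∈ ℤ/tℤ`,
cover the whole torus `(ℤ/tℤ)³`. -/
theorem cubes_cover_three_torus (r ξ : ℕ) (hr : 2 ≤ r) (hξ1 : 1 ≤ ξ) (hξ2 : ξ ≤ r)
    (s t : ℕ) (hs : s = r^2 + r + ξ) (ht : t = r^3 + r^2 + ξ * (r + 1)) :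
    (⋃ i : ZMod t,
      cube t s ![i, (r : ZMod t) * i, ((r^2 + r + 1 : ℕ) : ZMod t) * i]) = Set.univ := by
  have h3 : 1 ≤ r^3 := Nat.one_le_pow _ _ (by omega)
  have ht0 : 0 < t := by rw [ht]; omega
  haveI : NeZero t := ⟨by omega⟩
  ext x
  simp only [Set.mem_iUnion, Set.mem_univ, iff_true]
  set u := (x 1 - (r : ZMod t) * x 0).val with hu_def
  set c := (x 2 - ((r^2 + r + 1 : ℕ) : ZMod t) * x 0).val with hc_def
  obtain ⟨j, a, b, k1, k2, hj, ha, hb, h1, h2⟩ :=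
    key r ξ s t u c hr hξ1 hξ2 hs ht (ZMod.val_lt _) (ZMod.val_lt _)
  refine ⟨x 0 - (j : ZMod t), ?_⟩
  have hu' : ((u : ℕ) : ZMod t) = x 1 - (r : ZMod t) * x 0 := by
    rw [hu_def, ZMod.natCast_val, ZMod.cast_id]
  have hc' : ((c : ℕ) : ZMod t) = x 2 - ((r^2 + r + 1 : ℕ) : ZMod t) * x 0 := by
    rw [hc_def, ZMod.natCast_val, ZMod.cast_id]
  have hcast1 : (x 1 - (r : ZMod t) * x 0) + (r : ZMod t) * (j : ZMod t) = (a : ZMod t) := by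
    rw [← hu']
    have := congrArg (fun n : ℕ => (n : ZMod t)) h1
    push_cast at this
    rw [ZMod.natCast_self] at this
    simpa using this
  have hcast2 : (x 2 - ((r^2 + r + 1 : ℕ) : ZMod t) * x 0)
      + ((r^2 + r + 1 : ℕ) : ZMod t) * (j : ZMod t) = (b : ZMod t) := by
    rw [← hc']
    have := congrArg (fun n : ℕ => (n : ZMod t)) h2
    push_cast at this
    rw [ZMod.natCast_self] at this
    simpa using this
  intro i
  fin_cases i
  · refine ⟨j, hj, ?_⟩
    show x 0 = (x 0 - (j : ZMod t)) + (j : ZMod t)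
    ring
  · refine ⟨a, ha, ?_⟩
    show x 1 = (r : ZMod t) * (x 0 - (j : ZMod t)) + (a : ZMod t)
    linear_combination hcast1
  · refine ⟨b, hb, ?_⟩
    show x 2 = ((r^2 + r + 1 : ℕ) : ZMod t) * (x 0 - (j : ZMod t)) + (b : ZMod t)
    linear_combination hcast2

end
end

section
/- Let s ≤ t be coprime positive integers such that every covering of the discrete two-dimensional torus (ℤ/tℤ)² by squares of side s requires at least s squares. Suppose (ℤ/tℤ)³ is covered by exactly t cubes C₁,…,C_t of side s. Then for every α ∈ ℤ/tℤ, exactly s of the cubes C₁,…,C_t have nonempty intersection with the layer {(x₁,x₂,x₃) ∈ (ℤ/tℤ)³ : x₃ = α}; moreover, for every cube C_i with base vertex (x⁰₁(i),x⁰₂(i),x⁰₃(i)) there exists a cube C_j with x⁰₃(j) = x⁰₃(i) + s (mod t). -/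
open Set

noncomputable section

/-- If coverings of `(ℤ/tℤ)²` by squares of side `s` need at least `s` squares, and
`(ℤ/tℤ)³` is covered by exactly `t` cubes of side `s`, then every layer `{x₃ = α}`
meets exactly `s` cubes, and every cube has a successor. -/
theorem layers_and_successors (s t : ℕ) (hs : 0 < s) (hst : s ≤ t)
    (hco : Nat.Coprime s t)
    (hmin : ∀ (n : ℕ) (c : Fin n → Fin 2 → ZMod t),
      (⋃ j, square t s (c j)) = Set.univ → s ≤ n)
    (b : Fin t → Fin 3 → ZMod t)
    (hcov : (⋃ i, cube t s (b i)) = Set.univ) :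
    (∀ α : ZMod t,
      {i : Fin t | (cube t s (b i) ∩ {x : Fin 3 → ZMod t | x 2 = α}).Nonempty}.ncard = s) ∧
    (∀ i : Fin t, ∃ j : Fin t, b j 2 = b i 2 + (s : ZMod t)) := by
  classical
  haveI : NeZero t := ⟨by omega⟩
  -- natCast injectivity below t
  have hcastinj : ∀ a c : ℕ, a < t → c < t → (a : ZMod t) = (c : ZMod t) → a = c := by
    intro a c ha hc h
    have := congrArg ZMod.val h
    rwa [ZMod.val_natCast_of_lt ha, ZMod.val_natCast_of_lt hc] at this
  have hne0 : ∀ m : ℕ, 0 < m → m < t → (m : ZMod t) ≠ 0 := by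
    intro m hm hmt h
    rw [ZMod.natCast_eq_zero_iff] at h
    exact absurd (Nat.le_of_dvd hm h) (by omega)
  set S : ZMod t → Finset (Fin t) :=
    fun α => Finset.univ.filter (fun i => ∃ j, j < s ∧ α = b i 2 + (j : ZMod t)) with hS
  have hmem : ∀ α i, i ∈ S α ↔ ∃ j, j < s ∧ α = b i 2 + (j : ZMod t) := by
    intro α i; simp [hS]
  -- set description
  have hsetS : ∀ α : ZMod t,
      {i : Fin t | (cube t s (b i) ∩ {x : Fin 3 → ZMod t | x 2 = α}).Nonempty} = ↑(S α) := by
    intro α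
    ext i
    simp only [Set.mem_setOf_eq, Finset.coe_filter, hS, Finset.mem_univ, true_and]
    constructor
    · rintro ⟨x, hx, hx2⟩
      obtain ⟨j, hj, hxe⟩ := hx 2
      exact ⟨j, hj, by rw [← hx2, hxe]⟩
    · rintro ⟨j, hj, he⟩
      refine ⟨![b i 0, b i 1, α], ?_, ?_⟩
      · intro k
        fin_cases k
        · exact ⟨0, hs, by simp⟩
        · exact ⟨0, hs, by simp⟩
        · exact ⟨j, hj, by simpa using he⟩
      · simp
  -- lower bound
  have hlower : ∀ α : ZMod t, s ≤ (S α).card := by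
    intro α
    refine hmin (S α).card
      (fun k m => b ((S α).equivFin.symm k : Fin t) (Fin.castLE (by norm_num) m)) ?_
    ext y
    simp only [Set.mem_iUnion, Set.mem_univ, iff_true]
    have : (![y 0, y 1, α] : Fin 3 → ZMod t) ∈ ⋃ i, cube t s (b i) := by
      rw [hcov]; trivial
    obtain ⟨i, hi⟩ := Set.mem_iUnion.mp this
    have hiS : i ∈ S α := by
      obtain ⟨j, hj, he⟩ := hi 2
      exact (hmem α i).mpr ⟨j, hj, by simpa using he⟩
    refine ⟨(S α).equivFin ⟨i, hiS⟩, ?_⟩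
    intro m
    have h01 : ((S α).equivFin.symm ((S α).equivFin ⟨i, hiS⟩) : Fin t) = i := by
      rw [Equiv.symm_apply_apply]
    fin_cases m
    · obtain ⟨j, hj, he⟩ := hi 0
      exact ⟨j, hj, by rw [h01]; simpa using he⟩
    · obtain ⟨j, hj, he⟩ := hi 1
      exact ⟨j, hj, by rw [h01]; simpa using he⟩
  -- counting the layers one cube meets
  have hrow : ∀ β : ZMod t,
      (Finset.univ.filter (fun α : ZMod t => ∃ j, j < s ∧ α = β + (j : ZMod t))).card = s := by
    intro β
    have himg : Finset.univ.filter (fun α : ZMod t => ∃ j, j < s ∧ α = β + (j : ZMod t))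
        = Finset.image (fun j : Fin s => β + ((j : ℕ) : ZMod t)) Finset.univ := by
      ext α
      simp only [Finset.mem_filter, Finset.mem_univ, true_and, Finset.mem_image]
      constructor
      · rintro ⟨j, hj, rfl⟩; exact ⟨⟨j, hj⟩, rfl⟩
      · rintro ⟨j, rfl⟩; exact ⟨j, j.isLt, rfl⟩
    rw [himg, Finset.card_image_of_injective _ ?_, Finset.card_univ, Fintype.card_fin]
    intro j₁ j₂ h
    have : ((j₁ : ℕ) : ZMod t) = ((j₂ : ℕ) : ZMod t) := by
      exact add_left_cancel h
    exact Fin.ext (hcastinj _ _ (lt_of_lt_of_le j₁.isLt hst) (lt_of_lt_of_le j₂.isLt hst) this)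
  have hsum : ∑ α : ZMod t, (S α).card = t * s := by
    have : ∑ α : ZMod t, (S α).card
        = ∑ i : Fin t, (Finset.univ.filter
            (fun α : ZMod t => ∃ j, j < s ∧ α = b i 2 + (j : ZMod t))).card := by
      simp only [hS, Finset.card_filter]
      exact Finset.sum_comm
    rw [this]
    simp only [hrow]
    simp [Finset.sum_const, Finset.card_univ, mul_comm]
  have hcard : ∀ α : ZMod t, (S α).card = s := by
    intro α
    by_contra h
    have hlt : s < (S α).card := lt_of_le_of_ne (hlower α) (Ne.symm h)
    have : ∑ _α : ZMod t, s < ∑ α : ZMod t, (S α).card := by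
      refine Finset.sum_lt_sum (fun β _ => hlower β) ⟨α, Finset.mem_univ α, hlt⟩
    rw [hsum] at this
    simp [Finset.sum_const, Finset.card_univ, ZMod.card, mul_comm] at this
  refine ⟨fun α => by rw [hsetS α, Set.ncard_coe_finset, hcard], ?_⟩
  intro i
  rcases eq_or_lt_of_le hst with heq | hlt
  · -- s = t, coprime forces t = 1
    have ht1 : t = 1 := by
      subst heq
      simpa [Nat.Coprime] using hco
    exact ⟨i, by subst ht1; exact Subsingleton.elim _ _⟩
  · set β := b i 2 with hβ
    set A := S (β + ((s - 1 : ℕ) : ZMod t)) with hA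
    set B := S (β + ((s : ℕ) : ZMod t)) with hB
    have hcast1 : ((s - 1 : ℕ) : ZMod t) + 1 = (s : ZMod t) := by
      calc ((s - 1 : ℕ) : ZMod t) + 1 = ((s - 1 + 1 : ℕ) : ZMod t) := by push_cast; ring
        _ = (s : ZMod t) := by congr 1; omega
    have hAB : ∀ k, (k ∈ A ∧ k ∉ B) ↔ b k 2 = β := by
      intro k
      constructor
      · rintro ⟨hkA, hkB⟩
        obtain ⟨j, hj, he⟩ := (hmem _ k).mp hkA
        rcases Nat.lt_or_ge j (s - 1) with hj' | hj'
        · exfalso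
          apply hkB
          refine (hmem _ k).mpr ⟨j + 1, by omega, ?_⟩
          have := congrArg (· + (1 : ZMod t)) he
          rw [add_assoc, hcast1, add_assoc] at this
          rw [this]
          push_cast
          ring
        · have hj'' : j = s - 1 := by omega
          subst hj''
          exact (add_right_cancel he.symm)
      · intro hk
        constructor
        · exact (hmem _ k).mpr ⟨s - 1, by omega, by rw [hk]⟩
        · intro hkB
          obtain ⟨j, hj, he⟩ := (hmem _ k).mp hkB
          rw [hk] at he
          have : ((s : ℕ) : ZMod t) = (j : ZMod t) := add_left_cancel he
          have := hcastinj s j hlt (by omega) this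
          omega
    have hBA : ∀ k, (k ∈ B ∧ k ∉ A) ↔ b k 2 = β + (s : ZMod t) := by
      intro k
      constructor
      · rintro ⟨hkB, hkA⟩
        obtain ⟨j, hj, he⟩ := (hmem _ k).mp hkB
        rcases Nat.eq_zero_or_pos j with hj0 | hj0
        · subst hj0; simpa using he.symm
        · exfalso
          apply hkA
          refine (hmem _ k).mpr ⟨j - 1, by omega, ?_⟩
          have := congrArg (· + (-1 : ZMod t)) he
          have e1 : β + (s : ZMod t) + (-1) = β + ((s - 1 : ℕ) : ZMod t) := by
            rw [← hcast1]; ring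
          have e2 : b k 2 + (j : ZMod t) + (-1) = b k 2 + ((j - 1 : ℕ) : ZMod t) := by
            have : ((j - 1 : ℕ) : ZMod t) + 1 = (j : ZMod t) := by
              calc ((j - 1 : ℕ) : ZMod t) + 1 = ((j - 1 + 1 : ℕ) : ZMod t) := by push_cast; ring
                _ = (j : ZMod t) := by congr 1; omega
            rw [← this]; ring
          rw [e1, e2] at this
          exact this
      · intro hk
        constructor
        · exact (hmem _ k).mpr ⟨0, hs, by rw [hk]; simp⟩
        · intro hkA
          obtain ⟨j, hj, he⟩ := (hmem _ k).mp hkA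
          rw [hk] at he
          -- β + (s-1) = β + s + j  ⇒  (j+1 : ZMod t) = 0
          have h0 : ((j + 1 : ℕ) : ZMod t) = 0 := by
            have := congrArg (· + (1 : ZMod t) + (-(s : ZMod t)) + (-β)) he
            have lhs : β + ((s - 1 : ℕ) : ZMod t) + 1 + (-(s : ZMod t)) + (-β) = 0 := by
              rw [add_assoc β _ 1, hcast1]; ring
            have rhs : β + (s : ZMod t) + (j : ZMod t) + 1 + (-(s : ZMod t)) + (-β)
                = ((j + 1 : ℕ) : ZMod t) := by
              push_cast; ring
            rw [lhs, rhs] at this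
            exact this.symm
          exact hne0 (j + 1) (by omega) (by omega) h0
    have hiAB : i ∈ A \ B := by
      rw [Finset.mem_sdiff]
      exact (hAB i).mpr rfl
    have hcardAB : (A \ B).card = (B \ A).card := by
      have h1 := Finset.card_inter_add_card_sdiff A B
      have h2 := Finset.card_inter_add_card_sdiff B A
      rw [Finset.inter_comm] at h2
      have : A.card = B.card := by rw [hA, hB, hcard, hcard]
      omega
    have hBAne : (B \ A).Nonempty := by
      rw [← Finset.card_pos, ← hcardAB, Finset.card_pos]
      exact ⟨i, hiAB⟩
    obtain ⟨k, hk⟩ := hBAne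
    rw [Finset.mem_sdiff] at hk
    exact ⟨k, (hBA k).mp hk⟩

end
end

section
/- Let r ≥ 2 be an integer and ξ ∈ {1,…,r} with ξ² ≤ ξ + (r+1)·⌊ξ²/(r+1)⌋. Set s = r² + r + ξ and t = r³ + r² + 2ξr + ⌊ξ²/(r+1)⌋. Then: ⌊t/s⌋ = r and ⌈t/s⌉ = r+1; ⌈(t/s)·⌈t/s⌉⌉ = s; 0 ≤ s² − t(r+1) ≤ ξ; (s² − t(r+1))·(r+1) < s; and r·(s² + s − t(r+1)) ≤ t. -/
/-! Writing `ξ² = (r + 1) q + u` by division with remainder, the parameters satisfy the exact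
identity `s² - t (r + 1) = u`, and the hypothesis on `ξ` says precisely `u ≤ ξ`. Every condition
is then a polynomial inequality in `r`, `ξ`, `q`, `u`; the floor and ceiling conditions reduce to
`r s < t < (r + 1) s` and `(s - 1) s < t (r + 1) ≤ s²`. -/

section FloorCeil

variable {K : Type*} [Field K] [LinearOrder K] [IsStrictOrderedRing K] [FloorRing K]

theorem Int.floor_div_eq_of_le_of_lt {a b : K} {k : ℤ} (hb : 0 < b) (h₁ : k * b ≤ a)
    (h₂ : a < (k + 1) * b) : ⌊a / b⌋ = k := by
  rw [Int.floor_eq_iff, le_div_iff₀ hb, div_lt_iff₀ hb]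
  exact ⟨h₁, h₂⟩

theorem Int.ceil_div_eq_of_lt_of_le {a b : K} {k : ℤ} (hb : 0 < b) (h₁ : (k - 1) * b < a)
    (h₂ : a ≤ k * b) : ⌈a / b⌉ = k := by
  rw [Int.ceil_eq_iff, lt_div_iff₀ hb, div_le_iff₀ hb]
  exact ⟨h₁, h₂⟩

end FloorCeil

namespace Parameters

variable {r ξ q u s t : ℤ} (hs : s = r ^ 2 + r + ξ)
include hs

theorem rem_mul_succ_lt (hξ : 0 < ξ) (hξr : ξ ≤ r) (huξ : u ≤ ξ) : u * (r + 1) < s := by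
  subst hs
  nlinarith

variable (ht : t = r ^ 3 + r ^ 2 + 2 * ξ * r + q)
include ht

theorem sq_sub_mul_succ_eq (hdiv : (r + 1) * q + u = ξ ^ 2) : s ^ 2 - t * (r + 1) = u := by
  subst hs ht
  linear_combination -hdiv

theorem mul_lt (hξ : 0 < ξ) (hξr : ξ ≤ r) (hq : 0 ≤ q) : r * s < t := by
  subst hs ht
  nlinarith

theorem lt_succ_mul (hξ : 0 < ξ) (hξr : ξ ≤ r) (hu : 0 ≤ u)
    (hdiv : (r + 1) * q + u = ξ ^ 2) : t < (r + 1) * s := by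
  -- `(r + 1) q ≤ ξ² ≤ ξ r < ξ (r + 1)`
  have hq : q < ξ := by nlinarith
  subst hs ht
  nlinarith

theorem mul_rem_add_le (hξ : 0 < ξ) (hξr : ξ ≤ r) (hq : 0 ≤ q) (huξ : u ≤ ξ) :
    r * (u + s) ≤ t := by
  subst hs ht
  nlinarith

end Parameters

theorem parameters_satisfy_conditions_general (r ξ : ℕ) (hξ1 : 1 ≤ ξ) (hξ2 : ξ ≤ r)
    (hineq : ξ^2 ≤ ξ + (r + 1) * (ξ^2 / (r + 1)))
    (s t : ℕ) (hs : s = r^2 + r + ξ)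
    (ht : t = r^3 + r^2 + 2*ξ*r + ξ^2 / (r + 1)) :
    ⌊(t : ℚ) / (s : ℚ)⌋ = (r : ℤ) ∧
    ⌈(t : ℚ) / (s : ℚ)⌉ = (r : ℤ) + 1 ∧
    ⌈(t : ℚ) / (s : ℚ) * ((⌈(t : ℚ) / (s : ℚ)⌉ : ℤ) : ℚ)⌉ = (s : ℤ) ∧
    (0 ≤ (s : ℤ)^2 - t * (r + 1) ∧ (s : ℤ)^2 - t * (r + 1) ≤ (ξ : ℤ)) ∧
    ((s : ℤ)^2 - t * (r + 1)) * (r + 1) < (s : ℤ) ∧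
    (r : ℤ) * ((s : ℤ)^2 + s - t * (r + 1)) ≤ (t : ℤ) := by
  have hdiv := Nat.div_add_mod (ξ ^ 2) (r + 1)
  generalize ξ ^ 2 / (r + 1) = q at hdiv hineq ht
  generalize ξ ^ 2 % (r + 1) = u at hdiv
  have huξ : u ≤ ξ := by linarith
  have hS : (s : ℤ) = (r : ℤ) ^ 2 + r + ξ := by simp [hs]
  have hT : (t : ℤ) = (r : ℤ) ^ 3 + r ^ 2 + 2 * ξ * r + q := by simp [ht]
  have hdivZ : ((r : ℤ) + 1) * q + u = (ξ : ℤ) ^ 2 := by exact_mod_cast hdiv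
  have hξZ : (0 : ℤ) < ξ := by omega
  have hξrZ : (ξ : ℤ) ≤ r := by omega
  have hsQ : (0 : ℚ) < s := Nat.cast_pos.mpr (by omega)
  have hdefect := Parameters.sq_sub_mul_succ_eq hS hT hdivZ
  have hlo : (r : ℚ) * s < t := by exact_mod_cast Parameters.mul_lt hS hT hξZ hξrZ q.cast_nonneg
  have hhi : (t : ℚ) < (r + 1) * s := by
    exact_mod_cast Parameters.lt_succ_mul hS hT hξZ hξrZ u.cast_nonneg hdivZ
  have hceil : ⌈(t : ℚ) / s⌉ = r + 1 :=
    Int.ceil_div_eq_of_lt_of_le hsQ (by push_cast; linarith) (by push_cast; linarith)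
  refine ⟨Int.floor_div_eq_of_le_of_lt hsQ hlo.le (by push_cast; linarith), hceil, ?_,
    ⟨by omega, by omega⟩, ?_, ?_⟩
  · have hsq : (t : ℤ) * (r + 1) ≤ s * s := by linarith
    have hsq' : ((s : ℤ) - 1) * s < t * (r + 1) := by nlinarith
    rw [hceil, div_mul_eq_mul_div]
    exact Int.ceil_div_eq_of_lt_of_le hsQ (by exact_mod_cast hsq') (by exact_mod_cast hsq)
  · rw [hdefect]
    exact Parameters.rem_mul_succ_lt hS hξZ hξrZ (by omega)
  · rw [add_sub_right_comm, hdefect]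
    exact Parameters.mul_rem_add_le hS hT hξZ hξrZ q.cast_nonneg (by omega)

/-- The parameters of Theorem 3 satisfy conditions (i)–(v) of Lemma 4.
Here `ξ² / (r + 1)` denotes natural (floor) division. -/
theorem parameters_satisfy_conditions (r ξ : ℕ) (hr : 2 ≤ r) (hξ1 : 1 ≤ ξ) (hξ2 : ξ ≤ r)
    (hineq : ξ^2 ≤ ξ + (r + 1) * (ξ^2 / (r + 1)))
    (s t : ℕ) (hs : s = r^2 + r + ξ)
    (ht : t = r^3 + r^2 + 2*ξ*r + ξ^2 / (r + 1)) :
    ⌊(t : ℚ) / (s : ℚ)⌋ = (r : ℤ) ∧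
    ⌈(t : ℚ) / (s : ℚ)⌉ = (r : ℤ) + 1 ∧
    ⌈(t : ℚ) / (s : ℚ) * ((⌈(t : ℚ) / (s : ℚ)⌉ : ℤ) : ℚ)⌉ = (s : ℤ) ∧
    (0 ≤ (s : ℤ)^2 - t * (r + 1) ∧ (s : ℤ)^2 - t * (r + 1) ≤ (ξ : ℤ)) ∧
    ((s : ℤ)^2 - t * (r + 1)) * (r + 1) < (s : ℤ) ∧
    (r : ℤ) * ((s : ℤ)^2 + s - t * (r + 1)) ≤ (t : ℤ) :=
  parameters_satisfy_conditions_general r ξ hξ1 hξ2 hineq s t hs ht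
end
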